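/- For every α ∈ ℂ with α ≠ 0, the central extension (M³₀₁)_{θ_α}, defined as the vector space M³₀₁ × ℂ with product (x,v)·(y,w) = (x·y, θ_α(x,y)) where θ_α = α(Δ₁₃ + Δ₂₂ + Δ₃₁), is isomorphic as a ℂ-algebra to M⁴₀₁, the 4-dimensional ℂ-algebra with basis e₁, e₂, e₃, e₄ and products e₁e₁ = e₂, e₁e₂ = e₃, e₂e₁ = e₃, e₁e₃ = e₄, e₂e₂ = e₄, e₃e₁ = e₄ (all other products of basis elements zero). -/

import Mathlib

/-! The `e₄`-coordinate of a product in `M⁴₀₁` of two vectors from `span(e₁, e₂, e₃)`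
is `(Δ₁₃ + Δ₂₂ + Δ₃₁)(x, y)`, so `M⁴₀₁` is the central extension of `M³₀₁` by that cocycle, and
rescaling the central coordinate by `α⁻¹` turns the cocycle `θ_α` into it. -/

/-- The multiplication of the algebra `M³₀₁` on `ℂ³` (basis `e₁ = coord 0`, `e₂ = coord 1`,
`e₃ = coord 2`), determined bilinearly by `e₁e₁ = e₂`, `e₁e₂ = e₃`, `e₂e₁ = e₃`. -/
def m301mul (x y : Fin 3 → ℂ) : Fin 3 → ℂ :=
  ![0, x 0 * y 0, x 0 * y 1 + x 1 * y 0]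

/-- The bilinear form `Δᵢⱼ` on `ℂ³` with `Δᵢⱼ(e_l, e_k) = δᵢl·δⱼk`. -/
noncomputable def delta3 (i j : Fin 3) : (Fin 3 → ℂ) →ₗ[ℂ] (Fin 3 → ℂ) →ₗ[ℂ] ℂ :=
  LinearMap.mk₂ ℂ (fun x y => x i * y j)
    (fun m₁ m₂ n => by simp [add_mul])
    (fun c m n => by simp only [Pi.smul_apply, smul_eq_mul]; ring)
    (fun m n₁ n₂ => by simp [mul_add])
    (fun c m n => by simp only [Pi.smul_apply, smul_eq_mul]; ring)

/-- The multiplication of the central extension `(M³₀₁)_{θ_α}` on `M³₀₁ × ℂ`, where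
`θ_α = α(Δ₁₃ + Δ₂₂ + Δ₃₁)`: `(x,v)·(y,w) = (x·y, θ_α(x,y))`. -/
noncomputable def extMul301 (α : ℂ) (p q : (Fin 3 → ℂ) × ℂ) : (Fin 3 → ℂ) × ℂ :=
  (m301mul p.1 q.1, (α • (delta3 0 2 + delta3 1 1 + delta3 2 0)) p.1 q.1)

/-- The multiplication of the algebra `M⁴₀₁` on `ℂ⁴`: `e₁e₁ = e₂`, `e₁e₂ = e₃`, `e₂e₁ = e₃`,
`e₁e₃ = e₄`, `e₂e₂ = e₄`, `e₃e₁ = e₄`, all other products of basis vectors zero. -/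
def m401mul (x y : Fin 4 → ℂ) : Fin 4 → ℂ :=
  ![0, x 0 * y 0, x 0 * y 1 + x 1 * y 0, x 0 * y 2 + x 1 * y 1 + x 2 * y 0]

def Fin.snocLinearEquiv (R M : Type*) [Semiring R] [AddCommMonoid M] [Module R M] (n : ℕ) :
    ((Fin n → M) × M) ≃ₗ[R] (Fin (n + 1) → M) where
  toFun p := Fin.snoc p.1 p.2
  invFun x := (Fin.init x, x (Fin.last n))
  map_add' p q := funext <| Fin.lastCases (by simp) (by simp)
  map_smul' c p := funext <| Fin.lastCases (by simp) (by simp)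
  left_inv p := by simp
  right_inv x := by simp

theorem m401mul_snoc (x y : Fin 3 → ℂ) (a b : ℂ) :
    m401mul (Fin.snoc x a) (Fin.snoc y b) =
      Fin.snoc (m301mul x y) (x 0 * y 2 + x 1 * y 1 + x 2 * y 0) := by
  funext i; fin_cases i <;> rfl

theorem extMul301_apply (α : ℂ) (x y : Fin 3 → ℂ) (v w : ℂ) :
    extMul301 α (x, v) (y, w) = (m301mul x y, α * (x 0 * y 2 + x 1 * y 1 + x 2 * y 0)) := by
  simp [extMul301, delta3, mul_add]

noncomputable def extMul301EquivM401 {α : ℂ} (hα : α ≠ 0) :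
    ((Fin 3 → ℂ) × ℂ) ≃ₗ[ℂ] (Fin 4 → ℂ) :=
  ((LinearEquiv.refl ℂ _).prodCongr (LinearEquiv.smulOfNeZero ℂ ℂ α⁻¹ (inv_ne_zero hα))).trans
    (Fin.snocLinearEquiv ℂ ℂ 3)

theorem extMul301EquivM401_apply {α : ℂ} (hα : α ≠ 0) (x : Fin 3 → ℂ) (v : ℂ) :
    extMul301EquivM401 hα (x, v) = Fin.snoc x (α⁻¹ * v) :=
  rfl

/-- For every `α ≠ 0`, the central extension `(M³₀₁)_{θ_α}` is isomorphic as a ℂ-algebra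
to `M⁴₀₁`. -/
theorem centralExtension_m301_iso_m401 (α : ℂ) (hα : α ≠ 0) :
    ∃ Φ : ((Fin 3 → ℂ) × ℂ) ≃ₗ[ℂ] (Fin 4 → ℂ),
      ∀ p q : (Fin 3 → ℂ) × ℂ, Φ (extMul301 α p q) = m401mul (Φ p) (Φ q) := by
  refine ⟨extMul301EquivM401 hα, fun ⟨x, v⟩ ⟨y, w⟩ => ?_⟩
  rw [extMul301_apply, extMul301EquivM401_apply, extMul301EquivM401_apply,
    extMul301EquivM401_apply, m401mul_snoc, inv_mul_cancel_left₀ hα]
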